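/- Let a₁,…,aₙ be complex numbers all of absolute value r. Then the tropical sum a₁⊞⋯⊞aₙ contains 0 if and only if 0 lies in the convex hull of {a₁,…,aₙ}; moreover if 0 is in the convex hull then the tropical sum is the whole closed disk of radius r centered at 0, and otherwise the tropical sum is contained in a closed half-circle of the circle of radius r and equals the tropical sum of at most two of the summands. -/

import Mathlib

/-!
Induction on the number of summands, with the invariant that the partial tropical sum is either
the closed disk of radius `r`, with `0` already in the convex hull of the summands, or `arc p q`
for two summands with `p + q ≠ 0`. Adding a summand `a` to the disk gives the disk again. Adding
it to `arc p q` gives the disk if `-a` lies on the arc, and then `0` is a convex combination of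
`a`, `p`, `q`. Otherwise `tropAdd a b = arc a b` for every `b` on the arc, one of `a`, `p`, `q`
lies on the arc between the other two (write `a` in the basis `p`, `q` and look at the signs of
the coefficients), and the union of these arcs is the arc between the outer two. Finally,
`arc p q` lies in the open half-plane in the direction of `p + q`; this half-plane contains every
summand (each lies in the tropical sum), hence their convex hull, but not `0`.
-/

open Classical in
/-- The shortest arc connecting `a` and `b` on the circle `{z : |z| = |a|}`
(for `|a| = |b|`, `a + b ≠ 0`): the points of the circle lying on the cone
of nonnegative combinations of `a` and `b`. -/
noncomputable def arc (a b : ℂ) : Set ℂ :=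
  {c | ‖c‖ = ‖a‖ ∧
    ∃ l m : ℝ, 0 ≤ l ∧ 0 ≤ m ∧ c = (l : ℂ) * a + (m : ℂ) * b}

open Classical in
/-- The tropical sum of two complex numbers. -/
noncomputable def tropAdd (a b : ℂ) : Set ℂ :=
  if ‖b‖ < ‖a‖ then {a}
  else if ‖a‖ < ‖b‖ then {b}
  else if a + b = 0 then {c | ‖c‖ ≤ ‖a‖}
  else arc a b

/-- Elementwise extension of the tropical addition to subsets. -/
def setTrop (A B : Set ℂ) : Set ℂ :=
  ⋃ a ∈ A, ⋃ b ∈ B, tropAdd a b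

/-- The tropical sum of a list of complex numbers (the empty sum is `{0}`). -/
noncomputable def tropSumList (l : List ℂ) : Set ℂ :=
  l.foldr (fun a S => setTrop {a} S) {0}

open ComplexConjugate

def cone (p q : ℂ) : Set ℂ :=
  {c | ∃ l m : ℝ, 0 ≤ l ∧ 0 ≤ m ∧ c = (l : ℂ) * p + (m : ℂ) * q}

def cross (a b : ℂ) : ℝ := a.re * b.im - a.im * b.re

lemma mem_arc_iff {p q c : ℂ} : c ∈ arc p q ↔ ‖c‖ = ‖p‖ ∧ c ∈ cone p q := Iff.rfl

lemma cross_mul_add_cross_mul (p q z : ℂ) :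
    (cross z q : ℂ) * p + (cross p z : ℂ) * q = (cross p q : ℂ) * z := by
  apply Complex.ext <;>
    simp only [cross, Complex.add_re, Complex.add_im, Complex.re_ofReal_mul,
      Complex.im_ofReal_mul] <;>
    ring

lemma normSq_sub_mul_normSq_add (p q : ℂ) :
    Complex.normSq (p - q) * Complex.normSq (p + q) =
      4 * cross p q ^ 2 + (Complex.normSq p - Complex.normSq q) ^ 2 := by
  simp only [Complex.normSq_apply, cross, Complex.sub_re, Complex.sub_im, Complex.add_re,
    Complex.add_im]
  ring

lemma cross_ne_zero_or_eq {p q : ℂ} (hqp : ‖q‖ = ‖p‖) (hpq : p + q ≠ 0) :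
    cross p q ≠ 0 ∨ p = q := by
  refine or_iff_not_imp_left.mpr fun h => ?_
  have hnorm : Complex.normSq p = Complex.normSq q := by
    simp only [Complex.normSq_eq_norm_sq, hqp]
  have := normSq_sub_mul_normSq_add p q
  rw [not_not.mp h, hnorm] at this
  simpa [hpq, sub_eq_zero] using this

lemma mem_cone_or_of_cross_ne_zero {p q : ℂ} (hpq : cross p q ≠ 0) (a : ℂ) :
    a ∈ cone p q ∨ -a ∈ cone p q ∨ p ∈ cone a q ∨ q ∈ cone a p := by
  set α := cross a q / cross p q
  set β := cross p a / cross p q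
  have ha : a = α * p + β * q := by
    have hc : (cross p q : ℂ) ≠ 0 := Complex.ofReal_ne_zero.mpr hpq
    simp only [α, β, Complex.ofReal_div]
    field_simp
    linear_combination -(cross_mul_add_cross_mul p q a)
  rcases lt_or_ge 0 α with hα | hα <;> rcases lt_or_ge 0 β with hβ | hβ
  · exact Or.inl ⟨α, β, hα.le, hβ.le, ha⟩
  · refine Or.inr (Or.inr (Or.inl ⟨α⁻¹, -β / α, by positivity,
      div_nonneg (by linarith) hα.le, ?_⟩))
    have : (α : ℂ) ≠ 0 := Complex.ofReal_ne_zero.mpr hα.ne'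
    rw [ha]; push_cast; field_simp; ring
  · refine Or.inr (Or.inr (Or.inr ⟨β⁻¹, -α / β, by positivity,
      div_nonneg (by linarith) hβ.le, ?_⟩))
    have : (β : ℂ) ≠ 0 := Complex.ofReal_ne_zero.mpr hβ.ne'
    rw [ha]; push_cast; field_simp; ring
  · exact Or.inr (Or.inl ⟨-α, -β, by linarith, by linarith, by rw [ha]; push_cast; ring⟩)

lemma mem_arc_left (a b : ℂ) : a ∈ arc a b :=
  ⟨rfl, 1, 0, zero_le_one, le_rfl, by simp⟩

lemma mem_arc_right {a b : ℂ} (h : ‖b‖ = ‖a‖) : b ∈ arc a b :=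
  ⟨h, 0, 1, le_rfl, zero_le_one, by simp⟩

lemma arc_subset_arc {x y p q : ℂ} (hx : x ∈ arc p q) (hy : y ∈ arc p q) :
    arc x y ⊆ arc p q := by
  rintro c ⟨hc, l, m, hl, hm, rfl⟩
  obtain ⟨hxp, l₁, m₁, hl₁, hm₁, rfl⟩ := hx
  obtain ⟨-, l₂, m₂, hl₂, hm₂, rfl⟩ := hy
  refine ⟨hc.trans hxp, l * l₁ + m * l₂, l * m₁ + m * m₂, by positivity, by positivity, ?_⟩
  push_cast
  ring

lemma arc_comm {a b : ℂ} (h : ‖b‖ = ‖a‖) : arc a b = arc b a :=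
  (arc_subset_arc (mem_arc_right h.symm) (mem_arc_left b a)).antisymm
    (arc_subset_arc (mem_arc_right h) (mem_arc_left a b))

lemma arc_self {a : ℂ} (ha : a ≠ 0) : arc a a = {a} := by
  refine Set.Subset.antisymm ?_ (Set.singleton_subset_iff.mpr (mem_arc_left a a))
  rintro c ⟨hc, l, m, hl, hm, rfl⟩
  have hlm : |l + m| = 1 := by
    rw [← add_mul, ← Complex.ofReal_add, norm_mul, Complex.norm_real, Real.norm_eq_abs] at hc
    exact (mul_eq_right₀ (norm_ne_zero_iff.mpr ha)).mp hc
  rw [abs_of_nonneg (add_nonneg hl hm)] at hlm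
  rw [Set.mem_singleton_iff, ← add_mul, ← Complex.ofReal_add, hlm]
  simp

lemma mem_arc_or_of_neg_notMem_arc {a p q : ℂ} (hap : ‖a‖ = ‖p‖) (hqp : ‖q‖ = ‖p‖)
    (hpq : p + q ≠ 0) (hna : -a ∉ arc p q) :
    a ∈ arc p q ∨ p ∈ arc a q ∨ q ∈ arc a p := by
  rcases cross_ne_zero_or_eq hqp hpq with hc | rfl
  · rcases mem_cone_or_of_cross_ne_zero hc a with h | h | h | h
    · exact Or.inl (mem_arc_iff.mpr ⟨hap, h⟩)
    · exact absurd (mem_arc_iff.mpr ⟨by rw [norm_neg, hap], h⟩) hna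
    · exact Or.inr (Or.inl (mem_arc_iff.mpr ⟨hap.symm, h⟩))
    · exact Or.inr (Or.inr (mem_arc_iff.mpr ⟨hqp.trans hap.symm, h⟩))
  · exact Or.inr (Or.inr (mem_arc_right hap.symm))

lemma re_mul_conj_add_pos_of_mem_arc {p q z : ℂ} (hqp : ‖q‖ = ‖p‖) (hpq : p + q ≠ 0)
    (hz : z ∈ arc p q) : 0 < (z * conj (p + q)).re := by
  obtain ⟨hz, l, m, hl, hm, rfl⟩ := hz
  have hnorm : Complex.normSq q = Complex.normSq p := by
    simp only [Complex.normSq_eq_norm_sq, hqp]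
  have key : 2 * (((l : ℂ) * p + m * q) * conj (p + q)).re = (l + m) * Complex.normSq (p + q) := by
    simp only [Complex.normSq_apply] at hnorm ⊢
    simp only [Complex.mul_re, Complex.add_re, Complex.add_im, Complex.mul_im,
      Complex.ofReal_re, Complex.ofReal_im, Complex.conj_re, Complex.conj_im]
    linear_combination (m - l) * hnorm
  have hp : p ≠ 0 := by
    rintro rfl
    exact hpq (by simpa using hqp)
  have hlm : 0 < l + m := by
    refine (add_nonneg hl hm).lt_of_ne fun h => ?_
    obtain ⟨rfl, rfl⟩ : l = 0 ∧ m = 0 := ⟨by linarith, by linarith⟩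
    simp [eq_comm, hp] at hz
  nlinarith [Complex.normSq_pos.mpr hpq]

lemma exists_norm_eq_one_forall_mem_arc_re_pos {p q : ℂ} (hqp : ‖q‖ = ‖p‖) (hpq : p + q ≠ 0) :
    ∃ u : ℂ, ‖u‖ = 1 ∧ ∀ z ∈ arc p q, 0 < (z * conj u).re := by
  have hn : 0 < ‖p + q‖ := norm_pos_iff.mpr hpq
  refine ⟨(p + q) / ‖p + q‖, by simp [hn.ne'], fun z hz => ?_⟩
  rw [map_div₀, Complex.conj_ofReal, ← mul_div_assoc, Complex.div_ofReal_re]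
  exact div_pos (re_mul_conj_add_pos_of_mem_arc hqp hpq hz) hn

lemma tropAdd_eq_arc {a b : ℂ} (h : ‖a‖ = ‖b‖) (hab : a + b ≠ 0) : tropAdd a b = arc a b := by
  simp [tropAdd, h, hab]

lemma tropAdd_neg (a : ℂ) : tropAdd a (-a) = {c | ‖c‖ ≤ ‖a‖} := by
  simp [tropAdd]

lemma tropAdd_zero_right {a : ℂ} (ha : a ≠ 0) : tropAdd a 0 = {a} := by
  simp [tropAdd, ha]

lemma left_mem_tropAdd {a b : ℂ} (h : ‖b‖ ≤ ‖a‖) : a ∈ tropAdd a b := by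
  unfold tropAdd
  split_ifs with h₁ h₂
  · rfl
  · exact absurd h₂ h.not_gt
  · exact le_refl ‖a‖
  · exact mem_arc_left a b

lemma right_mem_tropAdd {a b : ℂ} (h : ‖a‖ ≤ ‖b‖) : b ∈ tropAdd a b := by
  unfold tropAdd
  split_ifs with h₁ h₂
  · exact absurd h₁ h.not_gt
  · rfl
  · exact le_of_not_gt h₂
  · exact mem_arc_right (le_antisymm (le_of_not_gt h₂) h)

lemma tropAdd_subset {a b : ℂ} (h : ‖b‖ ≤ ‖a‖) : tropAdd a b ⊆ {c | ‖c‖ ≤ ‖a‖} := by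
  unfold tropAdd
  split_ifs with h₁ h₂
  · simp
  · exact absurd h₂ h.not_gt
  · exact subset_rfl
  · exact fun c hc => hc.1.le

lemma setTrop_singleton (a : ℂ) (S : Set ℂ) : setTrop {a} S = ⋃ b ∈ S, tropAdd a b :=
  Set.biUnion_singleton a _

lemma setTrop_eq_of_neg_mem {a : ℂ} {S : Set ℂ} (hS : ∀ b ∈ S, ‖b‖ ≤ ‖a‖) (ha : -a ∈ S) :
    setTrop {a} S = {c | ‖c‖ ≤ ‖a‖} := by
  rw [setTrop_singleton]
  refine (Set.iUnion₂_subset fun b hb => tropAdd_subset (hS b hb)).antisymm ?_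
  rw [← tropAdd_neg]
  exact Set.subset_biUnion_of_mem ha

lemma setTrop_eq_biUnion_arc {a : ℂ} {S : Set ℂ} (hS : ∀ b ∈ S, ‖b‖ = ‖a‖) (ha : -a ∉ S) :
    setTrop {a} S = ⋃ b ∈ S, arc a b := by
  rw [setTrop_singleton]
  refine Set.iUnion₂_congr fun b hb => tropAdd_eq_arc (hS b hb).symm fun h => ?_
  exact ha (neg_eq_of_add_eq_zero_right h ▸ hb)

lemma biUnion_arc_eq_of_mem {a p q : ℂ} (ha : a ∈ arc p q) :
    ⋃ b ∈ arc p q, arc a b = arc p q := by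
  refine Set.Subset.antisymm (Set.iUnion₂_subset fun b hb => arc_subset_arc ha hb) fun c hc => ?_
  exact Set.mem_biUnion hc (mem_arc_right (hc.1.trans ha.1.symm))

lemma biUnion_arc_eq_of_left_mem {a p q : ℂ} (hp : p ∈ arc a q) (hqa : ‖q‖ = ‖a‖) :
    ⋃ b ∈ arc p q, arc a b = arc a q := by
  have hsub : arc p q ⊆ arc a q := arc_subset_arc hp (mem_arc_right hqa)
  refine Set.Subset.antisymm
    (Set.iUnion₂_subset fun b hb => arc_subset_arc (mem_arc_left a q) (hsub hb)) ?_
  exact Set.subset_biUnion_of_mem (mem_arc_right (hqa.trans hp.1.symm))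

lemma setTrop_arc_eq_arc {a p q : ℂ} (hap : ‖a‖ = ‖p‖) (hqp : ‖q‖ = ‖p‖) (hpq : p + q ≠ 0)
    (hna : -a ∉ arc p q) :
    ∃ x ∈ ({a, p, q} : Set ℂ), ∃ y ∈ ({a, p, q} : Set ℂ),
      x + y ≠ 0 ∧ setTrop {a} (arc p q) = arc x y := by
  have hadd : ∀ b ∈ arc p q, a + b ≠ 0 := fun b hb h =>
    hna (neg_eq_of_add_eq_zero_right h ▸ hb)
  rw [setTrop_eq_biUnion_arc (fun b hb => hb.1.trans hap.symm) hna]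
  rcases mem_arc_or_of_neg_notMem_arc hap hqp hpq hna with h | h | h
  · exact ⟨p, by simp, q, by simp, hpq, biUnion_arc_eq_of_mem h⟩
  · exact ⟨a, by simp, q, by simp, hadd q (mem_arc_right hqp),
      biUnion_arc_eq_of_left_mem h (hqp.trans hap.symm)⟩
  · refine ⟨a, by simp, p, by simp, hadd p (mem_arc_left p q), ?_⟩
    rw [arc_comm hqp]
    exact biUnion_arc_eq_of_left_mem h hap.symm

lemma zero_mem_convexHull_of_add_smul_add_smul_eq_zero {E : Type*} [AddCommGroup E] [Module ℝ E]
    {s : Set E} {a p q : E} (ha : a ∈ s) (hp : p ∈ s) (hq : q ∈ s) {l m : ℝ} (hl : 0 ≤ l)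
    (hm : 0 ≤ m) (h : a + l • p + m • q = 0) : (0 : E) ∈ convexHull ℝ s := by
  have hmem := Finset.univ.centerMass_mem_convexHull (w := ![1, l, m]) (z := ![a, p, q]) (s := s)
    (fun i _ => by fin_cases i <;> simp [hl, hm])
    (by
      simp only [Fin.sum_univ_three, Matrix.cons_val_zero, Matrix.cons_val_one, Matrix.cons_val]
      positivity)
    (fun i _ => by fin_cases i <;> simp [ha, hp, hq])
  simpa [Finset.centerMass, Fin.sum_univ_three, h] using hmem

lemma zero_notMem_convexHull_of_forall_re_pos {s : Set ℂ} {u : ℂ}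
    (h : ∀ z ∈ s, 0 < (z * conj u).re) : (0 : ℂ) ∉ convexHull ℝ s := by
  have hconv : Convex ℝ {z : ℂ | 0 < (z * conj u).re} :=
    convex_halfSpace_gt (Complex.reLm.comp (LinearMap.mulRight ℝ (conj u))).isLinear 0
  intro h0
  have : 0 < ((0 : ℂ) * conj u).re := convexHull_min h hconv h0
  simp at this

lemma tropSumList_cons (a : ℂ) (l : List ℂ) :
    tropSumList (a :: l) = setTrop {a} (tropSumList l) := rfl

lemma tropSumList_singleton (a : ℂ) : tropSumList [a] = tropAdd a 0 :=
  setTrop_singleton a {0} |>.trans (Set.biUnion_singleton 0 _)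

lemma mem_tropSumList_of_mem {l : List ℂ} {r : ℝ} (habs : ∀ a ∈ l, ‖a‖ = r) {x : ℂ} (hx : x ∈ l) :
    x ∈ tropSumList l := by
  induction l generalizing x with
  | nil => simp at hx
  | cons a l ih =>
    have ih' : ∀ y ∈ l, y ∈ tropSumList l := fun y hy =>
      ih (fun b hb => habs b (List.mem_cons_of_mem a hb)) hy
    have hnorm : ∀ y ∈ l, ‖y‖ = ‖a‖ := fun y hy =>
      (habs y (List.mem_cons_of_mem a hy)).trans (habs a List.mem_cons_self).symm
    rw [tropSumList_cons, setTrop_singleton, Set.mem_iUnion₂]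
    rcases List.mem_cons.mp hx with rfl | hx
    · rcases l with _ | ⟨y, l⟩
      · exact ⟨0, rfl, left_mem_tropAdd (by simp)⟩
      · exact ⟨y, ih' y List.mem_cons_self, left_mem_tropAdd (hnorm y List.mem_cons_self).le⟩
    · exact ⟨x, ih' x hx, right_mem_tropAdd (hnorm x hx).ge⟩

theorem tropSumList_eq_disk_or_arc {l : List ℂ} {r : ℝ} (hl : l ≠ []) (habs : ∀ a ∈ l, ‖a‖ = r) :
    (tropSumList l = {c | ‖c‖ ≤ r} ∧ (0 : ℂ) ∈ convexHull ℝ {a | a ∈ l}) ∨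
      ∃ p ∈ l, ∃ q ∈ l, p + q ≠ 0 ∧ tropSumList l = arc p q := by
  induction l with
  | nil => exact absurd rfl hl
  | cons a l ih =>
    have ha : ‖a‖ = r := habs a List.mem_cons_self
    have hmem : ∀ x ∈ l, x ∈ a :: l := fun x hx => List.mem_cons_of_mem a hx
    rcases eq_or_ne l [] with rfl | hl
    · by_cases ha0 : a = 0
      · subst ha0
        refine Or.inl ⟨?_, subset_convexHull ℝ _ List.mem_cons_self⟩
        simpa [← ha, tropSumList_singleton] using tropAdd_neg 0
      · refine Or.inr ⟨a, List.mem_cons_self, a, List.mem_cons_self, by simpa [← two_mul], ?_⟩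
        rw [tropSumList_singleton, tropAdd_zero_right ha0, arc_self ha0]
    rcases ih hl fun x hx => habs x (hmem x hx) with ⟨hdisk, hhull⟩ | ⟨p, hp, q, hq, hpq, harc⟩
    · refine Or.inl ⟨?_, convexHull_mono hmem hhull⟩
      rw [tropSumList_cons, hdisk, ← ha]
      exact setTrop_eq_of_neg_mem (fun b hb => hb) (by simp)
    have hpr : ‖p‖ = r := habs p (hmem p hp)
    have hqp : ‖q‖ = ‖p‖ := (habs q (hmem q hq)).trans hpr.symm
    rw [tropSumList_cons, harc]
    by_cases hna : -a ∈ arc p q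
    · refine Or.inl ⟨?_, ?_⟩
      · rw [← ha]
        exact setTrop_eq_of_neg_mem (fun b hb => (hb.1.trans (hpr.trans ha.symm)).le) hna
      · obtain ⟨-, l', m', hl', hm', h⟩ := hna
        refine zero_mem_convexHull_of_add_smul_add_smul_eq_zero List.mem_cons_self
          (hmem p hp) (hmem q hq) hl' hm' ?_
        simp only [Complex.real_smul]
        linear_combination -h
    · obtain ⟨x, hx, y, hy, hxy, h⟩ := setTrop_arc_eq_arc (ha.trans hpr.symm) hqp hpq hna
      have hmem' : ∀ z ∈ ({a, p, q} : Set ℂ), z ∈ a :: l := by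
        rintro z (rfl | rfl | rfl)
        exacts [List.mem_cons_self, hmem z hp, hmem z hq]
      exact Or.inr ⟨x, hmem' x hx, y, hmem' y hy, hxy, h⟩

/-- for complex numbers `a₁,…,aₙ` all of absolute value `r`,
the tropical sum contains `0` iff `0` lies in the convex hull of the
summands; if so, the tropical sum is the whole closed disk of radius `r`;
otherwise it is contained in a closed half-circle of the circle of radius
`r` and equals the tropical sum of at most two of the summands. -/
theorem tropSum_of_equal_abs (l : List ℂ) (r : ℝ) (hl : l ≠ [])
    (habs : ∀ a ∈ l, ‖a‖ = r) :
    (0 ∈ tropSumList l ↔ (0 : ℂ) ∈ convexHull ℝ {a | a ∈ l}) ∧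
    ((0 : ℂ) ∈ convexHull ℝ {a | a ∈ l} →
      tropSumList l = {c | ‖c‖ ≤ r}) ∧
    ((0 : ℂ) ∉ convexHull ℝ {a | a ∈ l} →
      (∃ u : ℂ, ‖u‖ = 1 ∧
        tropSumList l ⊆ {c | ‖c‖ = r ∧ 0 ≤ (c * (starRingEnd ℂ) u).re}) ∧
      ∃ a ∈ l, ∃ b ∈ l, tropSumList l = tropAdd a b) := by
  rcases tropSumList_eq_disk_or_arc hl habs with ⟨hdisk, hhull⟩ | ⟨p, hp, q, hq, hpq, harc⟩
  · obtain ⟨a, ha⟩ := List.exists_mem_of_ne_nil l hl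
    have h0 : (0 : ℂ) ∈ tropSumList l := by
      rw [hdisk, ← habs a ha]
      exact (norm_zero (E := ℂ)).trans_le (norm_nonneg a)
    exact ⟨iff_of_true h0 hhull, fun _ => hdisk, fun h => absurd hhull h⟩
  · have hqp : ‖q‖ = ‖p‖ := (habs q hq).trans (habs p hp).symm
    obtain ⟨u, hu, hpos⟩ := exists_norm_eq_one_forall_mem_arc_re_pos hqp hpq
    rw [← harc] at hpos
    have hhull : (0 : ℂ) ∉ convexHull ℝ {a | a ∈ l} :=
      zero_notMem_convexHull_of_forall_re_pos fun z hz => hpos z (mem_tropSumList_of_mem habs hz)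
    have h0 : (0 : ℂ) ∉ tropSumList l := fun h => by simpa using hpos 0 h
    refine ⟨iff_of_false h0 hhull, fun h => absurd h hhull, fun _ => ⟨⟨u, hu, fun c hc => ?_⟩,
      p, hp, q, hq, harc.trans (tropAdd_eq_arc hqp.symm hpq).symm⟩⟩
    refine ⟨?_, (hpos c hc).le⟩
    rw [harc] at hc
    exact hc.1.trans (habs p hp)
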